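/- Let T be a Galton–Watson tree with offspring distribution (p_i) having mean 1, and let t be a fixed finite ordered rooted tree with degree sequence d₁, …, d_k (the outdegrees of its k vertices in depth-first order). Then the expected number of rooted copies of t in T equals the product over i = 1, …, k of E[C(ξ, d_i)], i.e., E[ν_t(T)] = ∏_{i=1}^{k} Σ_{m ≥ d_i} p_m · C(m, d_i). -/
import Mathlib



/-- Finite ordered rooted trees. -/
inductive OTree where
  | node : List OTree → OTree

namespace OTree

mutual
/-- Number of vertices of a tree. -/
def size : OTree → ℕ
  | .node ts => 1 + sizeL ts
/-- Total number of vertices of a forest. -/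
def sizeL : List OTree → ℕ
  | [] => 0
  | t :: ts => size t + sizeL ts
end

mutual
/-- Maximum outdegree of a tree. -/
def maxDeg : OTree → ℕ
  | .node ts => max ts.length (maxDegL ts)
def maxDegL : List OTree → ℕ
  | [] => 0
  | t :: ts => max (maxDeg t) (maxDegL ts)
end

mutual
/-- List of the outdegrees of the vertices, in depth-first order. -/
def degList : OTree → List ℕ
  | .node ts => ts.length :: degListF ts
def degListF : List OTree → List ℕ
  | [] => []
  | t :: ts => degList t ++ degListF ts
end

mutual
/-- Number of rooted copies of `t` in `T`: subtrees (connected subgraphs, as ordered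
trees) of `T` isomorphic to `t` whose root is the root of `T`. -/
def nu : OTree → OTree → ℕ
  | .node ts, .node Ts => nuList ts Ts
/-- Number of order-preserving embeddings of the ordered forest `ts` into the forest `Ts`
(each tree of `ts` being a rooted copy inside the corresponding chosen tree of `Ts`). -/
def nuList : List OTree → List OTree → ℕ
  | [], _ => 1
  | _ :: _, [] => 0
  | t :: ts, T :: Ts => nu t T * nuList ts Ts + nuList (t :: ts) Ts
end

mutual
/-- Total number of (general) subtrees of `T` isomorphic to `t`. -/
def ncopies (t : OTree) : OTree → ℕ
  | .node Ts => nu t (.node Ts) + ncopiesL t Ts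
def ncopiesL (t : OTree) : List OTree → ℕ
  | [] => 0
  | T :: Ts => ncopies t T + ncopiesL t Ts
end

mutual
/-- List of all fringe subtrees of `T`, one for each vertex of `T`. -/
def fringes : OTree → List OTree
  | .node ts => .node ts :: fringesL ts
def fringesL : List OTree → List OTree
  | [] => []
  | t :: ts => fringes t ++ fringesL ts
end

mutual
/-- Number of vertices at depth `i`. -/
def countDepth : ℕ → OTree → ℕ
  | 0, _ => 1
  | i+1, .node ts => countDepthL i ts
  termination_by i T => sizeOf T
def countDepthL : ℕ → List OTree → ℕ
  | _, [] => 0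
  | i, t :: ts => countDepth i t + countDepthL i ts
  termination_by i ts => sizeOf ts
end

/-- The path with `k+1` vertices. -/
def pathT : ℕ → OTree
  | 0 => .node []
  | k+1 => .node [pathT k]

mutual
/-- List of the positions (addresses, as lists of child indices) of the vertices of `T`. -/
def positions : OTree → List (List ℕ)
  | .node ts => [] :: positionsL 0 ts
  termination_by T => sizeOf T
def positionsL : ℕ → List OTree → List (List ℕ)
  | _, [] => []
  | i, t :: ts => (positions t).map (fun q => i :: q) ++ positionsL (i+1) ts
  termination_by i ts => sizeOf ts
end

/-- Length of the longest common prefix of two addresses. -/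
def cpl : List ℕ → List ℕ → ℕ
  | a :: as, b :: bs => if a = b then cpl as bs + 1 else 0
  | _, _ => 0

/-- Graph distance in the tree between two vertex addresses. -/
def pdist (u v : List ℕ) : ℕ := (u.length - cpl u v) + (v.length - cpl u v)

/-- Number of unordered pairs of vertices of `T` at graph distance `ℓ`. -/
def vpairs (ℓ : ℕ) (T : OTree) : ℕ :=
  ((positions T).sublistsLen 2).countP fun l =>
    match l with
    | [u, v] => pdist u v == ℓ
    | _ => false

instance : MeasurableSpace OTree := ⊤

end OTree

namespace GWProof

open OTree ENNReal

mutual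
def enc : OTree → ℕ
  | .node ts => encL ts
def encL : List OTree → ℕ
  | [] => 0
  | t :: ts => Nat.pair (enc t) (encL ts) + 1
end

mutual
theorem enc_inj : ∀ t s : OTree, enc t = enc s → t = s
  | .node ts, .node ss, h => congrArg OTree.node (encL_inj ts ss h)
theorem encL_inj : ∀ ts ss : List OTree, encL ts = encL ss → ts = ss
  | [], [], _ => rfl
  | [], _ :: _, h => by simp [encL] at h
  | _ :: _, [], h => by simp [encL] at h
  | t :: ts, s :: ss, h => by
    simp only [encL] at h
    obtain ⟨h1, h2⟩ := Nat.pair_eq_pair.mp (Nat.add_right_cancel h)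
    rw [enc_inj t s h1, encL_inj ts ss h2]
end

instance : Countable OTree := ⟨⟨enc, fun a b => enc_inj a b⟩⟩

instance : MeasurableSingletonClass OTree := ⟨fun _ => trivial⟩

variable (p : ℕ → ℝ≥0∞)

/-- weight of a tree -/
noncomputable def w (s : OTree) : ℝ≥0∞ := ((degList s).map p).prod
/-- weight of a forest -/
noncomputable def wF (S : List OTree) : ℝ≥0∞ := ((degListF S).map p).prod

lemma wF_nil : wF p [] = 1 := by simp [wF, degListF]

lemma wF_cons (T : OTree) (Ts : List OTree) : wF p (T :: Ts) = w p T * wF p Ts := by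
  simp [wF, w, degListF]

lemma w_node (S : List OTree) : w p (.node S) = p S.length * wF p S := by
  simp [wF, w, degList]

/-- trees are exactly lists of trees -/
def nodeEquiv : OTree ≃ List OTree where
  toFun := fun s => match s with | .node ts => ts
  invFun := .node
  left_inv := fun s => by cases s <;> rfl
  right_inv := fun ts => rfl

def consEquiv (n : ℕ) : OTree × {l : List OTree // l.length = n} ≃
    {l : List OTree // l.length = n + 1} where
  toFun := fun x => ⟨x.1 :: x.2.1, by simp [x.2.2]⟩
  invFun := fun x => match x with
    | ⟨T :: Ts, h⟩ => (T, ⟨Ts, by simpa using h⟩)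
  left_inv := fun ⟨T, ⟨Ts, h⟩⟩ => rfl
  right_inv := fun x => match x with
    | ⟨T :: Ts, h⟩ => rfl

instance : Unique {l : List OTree // l.length = 0} where
  default := ⟨[], rfl⟩
  uniq := fun ⟨l, h⟩ => by
    cases l with
    | nil => rfl
    | cons a b => simp at h

/-- expected number of rooted copies -/
noncomputable def F (t : OTree) : ℝ≥0∞ := ∑' s : OTree, (nu t s : ℝ≥0∞) * w p s

/-- restricted to forests of length m -/
noncomputable def A (ts : List OTree) (m : ℕ) : ℝ≥0∞ :=
  ∑' S : {l : List OTree // l.length = m}, (nuList ts S.1 : ℝ≥0∞) * wF p S.1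

variable (hw : ∑' s : OTree, w p s = 1)

lemma A_zero (ts : List OTree) : A p ts 0 = nuList ts [] := by
  rw [A, tsum_eq_single (default : {l : List OTree // l.length = 0})
    (fun b hb => absurd (Unique.uniq _ b) hb)]
  show (nuList ts [] : ℝ≥0∞) * wF p [] = _
  rw [wF_nil, mul_one]

lemma A_succ (ts : List OTree) (m : ℕ) :
    A p ts (m+1) = ∑' T : OTree, ∑' S : {l : List OTree // l.length = m},
      (nuList ts (T :: S.1) : ℝ≥0∞) * (w p T * wF p S.1) := by
  rw [A, ← Equiv.tsum_eq (consEquiv m), ENNReal.tsum_prod']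
  exact tsum_congr fun T => tsum_congr fun S =>
    (congrArg (fun z => (nuList ts (T :: S.1) : ℝ≥0∞) * z) (wF_cons p T S.1))

include hw in
lemma A_nil_eq : ∀ m, A p [] m = 1 := by
  intro m
  induction m with
  | zero => simp [A_zero, nuList]
  | succ m ih =>
    rw [A_succ]
    calc ∑' T : OTree, ∑' S : {l : List OTree // l.length = m},
          (nuList [] (T :: S.1) : ℝ≥0∞) * (w p T * wF p S.1)
        = ∑' T : OTree, w p T * A p [] m := by
          refine tsum_congr fun T => ?_
          rw [A, ← ENNReal.tsum_mul_left]
          exact tsum_congr fun S => by simp [nuList]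
      _ = 1 := by rw [ih]; simpa using hw

include hw in
lemma A_cons_rec (t : OTree) (ts : List OTree) (m : ℕ) :
    A p (t :: ts) (m + 1) = F p t * A p ts m + A p (t :: ts) m := by
  rw [A_succ]
  have : ∀ T : OTree, ∑' S : {l : List OTree // l.length = m},
      (nuList (t :: ts) (T :: S.1) : ℝ≥0∞) * (w p T * wF p S.1)
      = ((nu t T : ℝ≥0∞) * w p T) * A p ts m + w p T * A p (t :: ts) m := by
    intro T
    rw [A, A, ← ENNReal.tsum_mul_left, ← ENNReal.tsum_mul_left, ← ENNReal.tsum_add]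
    refine tsum_congr fun S => ?_
    show ((nu t T * nuList ts S.1 + nuList (t :: ts) S.1 : ℕ) : ℝ≥0∞) * _ = _
    push_cast
    ring
  rw [tsum_congr this, ENNReal.tsum_add, ENNReal.tsum_mul_right, ENNReal.tsum_mul_right,
    hw, one_mul, ← F]

include hw in
lemma A_eq : ∀ m (ts : List OTree),
    A p ts m = (m.choose ts.length : ℝ≥0∞) * (ts.map (F p)).prod := by
  intro m
  induction m with
  | zero =>
    intro ts
    cases ts with
    | nil => simp [A_zero, nuList]
    | cons t ts => simp [A_zero, nuList]
  | succ m ih =>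
    intro ts
    cases ts with
    | nil => simp [A_nil_eq p hw]
    | cons t ts =>
      rw [A_cons_rec p hw, ih, ih]
      simp only [List.length_cons, List.map_cons, List.prod_cons, Nat.choose_succ_succ]
      push_cast
      ring

include hw in
lemma F_node (ts : List OTree) :
    F p (.node ts) = (∑' m : ℕ, p m * (m.choose ts.length : ℝ≥0∞)) * (ts.map (F p)).prod := by
  have h1 : F p (.node ts) = ∑' S : List OTree, (nuList ts S : ℝ≥0∞) * (p S.length * wF p S) := by
    rw [F, ← Equiv.tsum_eq nodeEquiv.symm]
    refine tsum_congr fun S => ?_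
    show (nuList ts S : ℝ≥0∞) * w p (.node S) = _
    rw [w_node]
  rw [h1, ← Equiv.tsum_eq (Equiv.sigmaFiberEquiv (List.length : List OTree → ℕ)),
    ENNReal.tsum_sigma']
  have h3 : ∀ m : ℕ, (∑' S : {l : List OTree // l.length = m},
      (nuList ts S.1 : ℝ≥0∞) * (p S.1.length * wF p S.1))
      = (p m * (m.choose ts.length : ℝ≥0∞)) * (ts.map (F p)).prod := by
    intro m
    have h4 : ∀ S : {l : List OTree // l.length = m},
        (nuList ts S.1 : ℝ≥0∞) * (p S.1.length * wF p S.1)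
        = p m * ((nuList ts S.1 : ℝ≥0∞) * wF p S.1) := fun S => by rw [S.2]; ring
    rw [tsum_congr h4, ENNReal.tsum_mul_left, ← A, A_eq p hw]
    ring
  exact (tsum_congr h3).trans ENNReal.tsum_mul_right

mutual
theorem F_eq (q : ℕ → ℝ≥0∞) (hq : ∑' s : OTree, w q s = 1) : ∀ t : OTree,
    F q t = ((degList t).map (fun d => ∑' m : ℕ, q m * (m.choose d : ℝ≥0∞))).prod
  | .node ts => by
    rw [F_node q hq, degList]
    simp only [List.map_cons, List.prod_cons]
    rw [FL_eq q hq ts]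
theorem FL_eq (q : ℕ → ℝ≥0∞) (hq : ∑' s : OTree, w q s = 1) : ∀ ts : List OTree,
    (ts.map (F q)).prod = ((degListF ts).map (fun d => ∑' m : ℕ, q m * (m.choose d : ℝ≥0∞))).prod
  | [] => by simp [degListF]
  | t :: ts => by
    simp only [List.map_cons, List.prod_cons, degListF, List.map_append, List.prod_append]
    rw [F_eq q hq t, FL_eq q hq ts]
end

end GWProof


open MeasureTheory ProbabilityTheory Filter Topology ENNReal

/-- The expected number of rooted copies of a fixed ordered tree `t` in a Galton--Watson
tree with offspring distribution `p` of mean `1` equals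
`∏ over the degree sequence d of t of Σ_m p_m · C(m, d)`. -/
theorem expected_rooted_copies_GW
    {Ω : Type} [MeasureSpace Ω] [IsProbabilityMeasure (ℙ : Measure Ω)]
    (p : ℕ → ℝ≥0∞) (hpsum : ∑' i, p i = 1)
    (T : Ω → OTree) (hTmeas : Measurable T)
    (hT : ∀ s : OTree, ℙ {ω | T ω = s} = ((OTree.degList s).map p).prod)
    (hmean : ∑' i : ℕ, (i : ℝ≥0∞) * p i = 1)
    (t : OTree) :
    ∫⁻ ω, (OTree.nu t (T ω) : ℝ≥0∞) ∂ℙ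
      = ((OTree.degList t).map (fun d => ∑' m : ℕ, p m * (m.choose d : ℝ≥0∞))).prod := by
    classical
  have hg : Measurable (fun s : OTree => (OTree.nu t s : ℝ≥0∞)) := measurable_from_top
  have hmap : ∀ s : OTree, (Measure.map T ℙ) {s} = ℙ {ω | T ω = s} := by
    intro s
    rw [Measure.map_apply hTmeas (MeasurableSet.singleton s)]
    rfl
  have hw : ∑' s : OTree, GWProof.w p s = 1 := by
    have huniv : (Measure.map T ℙ) Set.univ = 1 := by
      rw [Measure.map_apply hTmeas MeasurableSet.univ]
      simp
    have := MeasureTheory.tsum_measure_preimage_singleton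
      (μ := Measure.map T ℙ) (Set.countable_univ (α := OTree)) (f := id)
      (fun y _ => by simp)
    simp only [Set.preimage_univ, Set.preimage_id] at this
    rw [huniv] at this
    calc ∑' s : OTree, GWProof.w p s
        = ∑' s : OTree, (Measure.map T ℙ) {s} := by
          refine tsum_congr fun s => ?_
          rw [hmap, hT s]; rfl
      _ = 1 := by
          rw [← this, ← Equiv.tsum_eq (Equiv.Set.univ OTree).symm]
          rfl
  calc ∫⁻ ω, (OTree.nu t (T ω) : ℝ≥0∞) ∂ℙ
      = ∫⁻ s, (OTree.nu t s : ℝ≥0∞) ∂(Measure.map T ℙ) := (lintegral_map hg hTmeas).symm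
    _ = ∑' s : OTree, (OTree.nu t s : ℝ≥0∞) * (Measure.map T ℙ) {s} :=
        lintegral_countable' _
    _ = GWProof.F p t := by
        refine tsum_congr fun s => ?_
        rw [hmap, hT s]; rfl
    _ = _ := GWProof.F_eq p hw t
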